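/- Let H be a connected directed acyclic graph and f : 𝔓(H) → 𝔓(G) a map of properads that has a vertex lift f̃ : 𝚟(H) → 𝚟(G). If the color map f : 𝚎(H) → 𝚎(G) is injective, then f̃ is injective and f arises from an étale monomorphism of graphs H → G (a naive graph morphism that is injective on edges and vertices and induces bijections in(v) ≅ in(f̃v) and out(v) ≅ out(f̃v) for every vertex v of H). -/
import Mathlib


/-!
STATEMENT 19: Let `H` be a connected directed acyclic graph and `f : 𝔓(H) → 𝔓(G)` a map
of properads that has a vertex lift `f̃ : 𝚟(H) → 𝚟(G)`.  If the color map
`f : 𝚎(H) → 𝚎(G)` is injective, then `f̃` is injective and `f` arises from an étale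
monomorphism of graphs `H → G`: a naive graph morphism (commuting with the incidence
data) which is injective on edges and on vertices and induces bijections
`in(v) ≅ in(f̃ v)` and `out(v) ≅ out(f̃ v)` for every vertex `v` of `H`.
-/

/-- A directed graph with loose ends: each edge has at most one source vertex (`src`,
the vertex having it as an output; `none` means the edge is an input of the graph) and
at most one target vertex (`tgt`, the vertex having it as an input; `none` means the
edge is an output of the graph). -/
structure DGraph where
  E : Type
  V : Type
  src : E → Option V
  tgt : E → Option V

namespace DGraph

variable (G : DGraph)

/-- Undirected incidence between edges and vertices. -/
def step : (G.E ⊕ G.V) → (G.E ⊕ G.V) → Prop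
  | Sum.inl e, Sum.inr v => G.src e = some v ∨ G.tgt e = some v
  | Sum.inr v, Sum.inl e => G.src e = some v ∨ G.tgt e = some v
  | _, _ => False

/-- `G` is connected as an undirected graph. -/
def ConnectedG : Prop :=
  Nonempty (G.E ⊕ G.V) ∧ ∀ x y : G.E ⊕ G.V, Relation.ReflTransGen G.step x y

/-- `G` is acyclic: it has no directed cycles. -/
def Acyclic : Prop :=
  ∀ v : G.V, ¬ Relation.TransGen
    (fun a b : G.V => ∃ e, G.src e = some a ∧ G.tgt e = some b) v v

/-- An (ordinary) subgraph of `G`: a set of edges and a set of vertices, with the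
inherited incidence data. -/
structure Sub where
  SE : Set G.E
  SV : Set G.V

variable {G}

/-- Membership of an edge or a vertex in a subgraph. -/
def Sub.Mem (S : Sub G) : G.E ⊕ G.V → Prop
  | Sum.inl e => e ∈ S.SE
  | Sum.inr v => v ∈ S.SV

/-- Inclusion of subgraphs. -/
def Sub.le (S T : Sub G) : Prop := S.SE ⊆ T.SE ∧ S.SV ⊆ T.SV

/-- The union `S ∪̇ T` of two subgraphs. -/
def Sub.union (S T : Sub G) : Sub G := ⟨S.SE ∪ T.SE, S.SV ∪ T.SV⟩

/-- The maximal subgraph of `G`. -/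
def top (G : DGraph) : Sub G := ⟨Set.univ, Set.univ⟩

/-- `S` is an open subgraph of the subgraph `A`: every edge of `A` incident to a vertex
of `S` belongs to `S`. -/
def Sub.OpenIn (A S : Sub G) : Prop :=
  ∀ v ∈ S.SV, ∀ e ∈ A.SE, (G.src e = some v ∨ G.tgt e = some v) → e ∈ S.SE

/-- `S` is connected: it is nonempty and any two of its edges/vertices are joined by a
zig-zag of incidences inside `S`. -/
def Sub.Connected (S : Sub G) : Prop :=
  (∃ x, S.Mem x) ∧ ∀ x y, S.Mem x → S.Mem y →
    Relation.ReflTransGen (fun a b => G.step a b ∧ S.Mem a ∧ S.Mem b) x y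

/-- One step of a directed path: from an edge to its target vertex, or from a vertex to
an edge sourced at it. -/
def dstep : (G.E ⊕ G.V) → (G.E ⊕ G.V) → Prop
  | Sum.inl e, Sum.inr v => G.tgt e = some v
  | Sum.inr v, Sum.inl e => G.src e = some v
  | _, _ => False

/-- `S` is convex in the subgraph `A`: every directed path of `A` (an alternating list
of edges and vertices) which starts and ends at an edge of `S` lies entirely in `S`.
(This is Kock's lifting-property characterization of structured subgraphs.) -/
def Sub.ConvexIn (A S : Sub G) : Prop :=
  ∀ l : List (G.E ⊕ G.V), l.Chain' dstep → (∀ x ∈ l, A.Mem x) →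
    (∀ x, l.head? = some x → ∃ e, x = Sum.inl e ∧ e ∈ S.SE) →
    (∀ x, l.getLast? = some x → ∃ e, x = Sum.inl e ∧ e ∈ S.SE) →
    ∀ x ∈ l, S.Mem x

/-- `S` is a structured subgraph of the subgraph `A`: it is contained in `A`, open in
`A`, connected, and convex in `A`. -/
def Sub.StructuredIn (A S : Sub G) : Prop :=
  S.le A ∧ S.OpenIn A ∧ S.Connected ∧ S.ConvexIn A

/-- `S` is a structured subgraph of `G`. -/
def Sub.Structured (S : Sub G) : Prop := S.StructuredIn (top G)

/-- The set `in(S)` of input edges of a subgraph: edges of `S` which are not the output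
of any vertex of `S`. -/
def Sub.inSet (S : Sub G) : Set G.E :=
  {e | e ∈ S.SE ∧ ∀ v ∈ S.SV, G.src e ≠ some v}

/-- The set `out(S)` of output edges of a subgraph: edges of `S` which are not the input
of any vertex of `S`. -/
def Sub.outSet (S : Sub G) : Set G.E :=
  {e | e ∈ S.SE ∧ ∀ v ∈ S.SV, G.tgt e ≠ some v}

end DGraph

/-- The data of a map of free properads `𝔓(H) → 𝔓(G)` together with a vertex lift: a
color (edge) map `fE`, a vertex map `fV` taking each vertex generator of `𝔓(H)` to a
vertex generator of `𝔓(G)`, such that `fE` restricts to bijections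
`in(v) ≅ in(fV v)` and `out(v) ≅ out(fV v)` for every vertex `v` (the generator `fV v`
has the same profile as the image of the generator `v`). -/
structure VLMap (H G : DGraph) where
  fE : H.E → G.E
  fV : H.V → G.V
  bij_in : ∀ v : H.V, Set.BijOn fE {e | H.tgt e = some v} {e | G.tgt e = some (fV v)}
  bij_out : ∀ v : H.V, Set.BijOn fE {e | H.src e = some v} {e | G.src e = some (fV v)}

open DGraph in
theorem stmt19 (H G : DGraph) [Finite H.E] [Finite H.V] [Finite G.E] [Finite G.V]
    (hc : H.ConnectedG) (ha : H.Acyclic)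
    (f : VLMap H G) (hinjE : Function.Injective f.fE) :
    Function.Injective f.fV ∧ Function.Injective f.fE ∧
    -- (fE, fV) is a naive morphism of graphs, commuting with the incidence data …
    (∀ e v, H.src e = some v → G.src (f.fE e) = some (f.fV v)) ∧
    (∀ e v, H.tgt e = some v → G.tgt (f.fE e) = some (f.fV v)) ∧
    -- … which is étale: it induces bijections on the in- and out-sets of each vertex
    (∀ v : H.V, Set.BijOn f.fE {e | H.tgt e = some v} {e | G.tgt e = some (f.fV v)}) ∧
    (∀ v : H.V, Set.BijOn f.fE {e | H.src e = some v} {e | G.src e = some (f.fV v)}) := by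
  have hsrc : ∀ e v, H.src e = some v → G.src (f.fE e) = some (f.fV v) :=
    fun e v h => (f.bij_out v).mapsTo h
  have htgt : ∀ e v, H.tgt e = some v → G.tgt (f.fE e) = some (f.fV v) :=
    fun e v h => (f.bij_in v).mapsTo h
  refine ⟨?_, hinjE, hsrc, htgt, f.bij_in, f.bij_out⟩
  intro v w hvw
  by_cases hin : ∃ e, H.tgt e = some v
  · obtain ⟨e, he⟩ := hin
    have h1 : G.tgt (f.fE e) = some (f.fV w) := hvw ▸ htgt e v he
    obtain ⟨e', he', heq⟩ := (f.bij_in w).surjOn h1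
    have : e' = e := hinjE heq
    subst this
    have : some v = some w := he.symm.trans he'
    exact Option.some_injective _ this
  · by_cases hout : ∃ e, H.src e = some v
    · obtain ⟨e, he⟩ := hout
      have h1 : G.src (f.fE e) = some (f.fV w) := hvw ▸ hsrc e v he
      obtain ⟨e', he', heq⟩ := (f.bij_out w).surjOn h1
      have : e' = e := hinjE heq
      subst this
      have : some v = some w := he.symm.trans he'
      exact Option.some_injective _ this
    · -- v is isolated; connectedness forces w = v
      have h := hc.2 (Sum.inr v) (Sum.inr w)
      rcases h.cases_head with heq | ⟨c, hstep, _⟩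
      · exact (Sum.inr.injEq v w ▸ heq)
      · cases c with
        | inl e =>
          rcases hstep with h | h
          · exact absurd ⟨e, h⟩ hout
          · exact absurd ⟨e, h⟩ hin
        | inr u => exact absurd hstep (by simp [DGraph.step])
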